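/- Let r > 0, let ℓ ≥ 1, and let K = {a₀ < a₁ < … < a_{ℓ−1}} be a set of ℓ nonnegative integers. Let U_K be the ℓ × ℓ real matrix with (b, c)-entry ⟨ψ_{c,r}, ψ_{a_b,0}⟩ for 0 ≤ b, c ≤ ℓ−1. Then |det U_K| = e^{−ℓr²/4} · √(1/(F_{[ℓ]} · F_K)) · (r/√2)^{Σ_K − ℓ(ℓ−1)/2} · C_K. -/

import Mathlib

open MeasureTheory Real

/-- The physicist's Hermite polynomial `h_j(x) = (−1)^j e^{x²} (d^j/dx^j) e^{−x²}`. -/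
noncomputable def hermitePoly (j : ℕ) (x : ℝ) : ℝ :=
  (-1)^j * Real.exp (x^2) * iteratedDeriv j (fun t => Real.exp (-(t^2))) x

/-- The Hermite function `ψ_j`. -/
noncomputable def psi (j : ℕ) (x : ℝ) : ℝ :=
  (-1)^j * (Real.sqrt (2^j * (Nat.factorial j : ℝ) * Real.sqrt Real.pi))⁻¹ *
    hermitePoly j x * Real.exp (-(x^2) / 2)

/-- `⟨ψ_{c,r}, ψ_{b,0}⟩`. -/
noncomputable def psiIP (r : ℝ) (c b : ℕ) : ℝ := ∫ x, psi c (x - r) * psi b x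

/-- `C_K = ∏_{c₂ < c₁} (a_{c₁} − a_{c₂})`. -/
noncomputable def CK {ℓ : ℕ} (a : Fin ℓ → ℕ) : ℝ :=
  ∏ c₁, ∏ c₂ ∈ Finset.univ.filter (· < c₁), ((a c₁ : ℝ) - (a c₂ : ℝ))

/-- `F_K = ∏_c (a_c)!`. -/
noncomputable def FK {ℓ : ℕ} (a : Fin ℓ → ℕ) : ℝ := ∏ c, (Nat.factorial (a c) : ℝ)

/-- `F_{[ℓ]} = ∏_{c=0}^{ℓ−1} c!`. -/
noncomputable def Fl (ℓ : ℕ) : ℝ := ∏ c ∈ Finset.range ℓ, (Nat.factorial c : ℝ)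

/-! Substituting `x = u + r/2` turns `⟨ψ_{c,r}, ψ_{m,0}⟩` into `e^{-r²/4}` times the Gaussian
integral of `h_c(u - r/2) h_m(u + r/2)`. Expanding both factors by the Appell property
`h_n(x + y) = ∑_k C(n,k) (2y)^{n-k} h_k(x)` (a consequence of `h_n' = 2n h_{n-1}`) and using the
orthogonality `∫ h_j h_k e^{-x²} = δ_{jk} 2^j j! √π`, the entry becomes
`±e^{-r²/4} r^m √π q_c(m) / (N_m N_c)`, where `N_j = (2^j j! √π)^{1/2}` and `q_c` is a polynomial
of degree `c` with leading coefficient `(2/r)^c`. So `U_K` is `(q_c(a_b))_{b,c}` rescaled along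
rows and columns, and `det (q_c(a_b)) = ∏_c (2/r)^c · C_K` by the Vandermonde determinant. What
remains is bookkeeping of the scalars. -/

open Polynomial Finset

noncomputable def physHermite : ℕ → ℝ[X]
  | 0 => 1
  | n + 1 => C 2 * X * physHermite n - derivative (physHermite n)

@[simp] lemma physHermite_zero : physHermite 0 = 1 := rfl

lemma physHermite_succ (n : ℕ) :
    physHermite (n + 1) = C 2 * X * physHermite n - derivative (physHermite n) := rfl

lemma derivative_physHermite_succ (n : ℕ) :
    derivative (physHermite (n + 1)) = C (2 * (n + 1) : ℝ) * physHermite n := by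
  induction n with
  | zero => simp [physHermite_succ]
  | succ n ih =>
    rw [physHermite_succ (n + 1), derivative_sub, derivative_mul, derivative_mul, derivative_C,
      derivative_X, ih, derivative_C_mul, physHermite_succ n]
    push_cast
    simp only [map_add, map_mul, map_natCast, map_one, map_ofNat]
    ring

lemma natDegree_physHermite_le (n : ℕ) : (physHermite n).natDegree ≤ n := by
  induction n with
  | zero => simp
  | succ n ih =>
    rw [physHermite_succ]
    refine (natDegree_sub_le _ _).trans (max_le ?_ ?_)
    · refine natDegree_mul_le.trans ?_
      have : (C (2 : ℝ) * X).natDegree ≤ 1 := by simp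
      omega
    · exact (natDegree_derivative_le _).trans (by omega)

lemma iterate_derivative_physHermite (k n : ℕ) :
    derivative^[k] (physHermite n) = C (2 ^ k * n.descFactorial k : ℝ) * physHermite (n - k) := by
  induction k generalizing n with
  | zero => simp
  | succ k ih =>
    rw [Function.iterate_succ_apply]
    cases n with
    | zero => simp
    | succ n =>
      rw [derivative_physHermite_succ, iterate_derivative_C_mul, ih, ← mul_assoc, ← C_mul,
        Nat.succ_descFactorial_succ, Nat.add_sub_add_right]
      push_cast
      ring_nf

lemma hasseDeriv_physHermite (k n : ℕ) :
    hasseDeriv k (physHermite n) = C (2 ^ k * n.choose k : ℝ) * physHermite (n - k) := by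
  refine smul_right_injective ℝ[X] (Nat.factorial_ne_zero k) ?_
  change k.factorial • hasseDeriv k (physHermite n) = k.factorial • _
  rw [← LinearMap.smul_apply, factorial_smul_hasseDeriv, iterate_derivative_physHermite,
    Nat.descFactorial_eq_factorial_mul_choose, nsmul_eq_mul, ← C_eq_natCast, ← mul_assoc, ← C_mul]
  push_cast
  ring_nf

lemma physHermite_eval_add (n : ℕ) (x y : ℝ) :
    (physHermite n).eval (x + y)
      = ∑ k ∈ range (n + 1), (n.choose k : ℝ) * (2 * y) ^ (n - k) * (physHermite k).eval x := by
  rw [add_comm, ← taylor_eval, eval_eq_sum_range' (n := n + 1)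
    (by rw [natDegree_taylor]; exact Nat.lt_succ_of_le (natDegree_physHermite_le n)),
    ← sum_range_reflect]
  refine sum_congr rfl fun k hk => ?_
  have hk : k ≤ n := Nat.lt_succ_iff.mp (mem_range.mp hk)
  rw [taylor_coeff, hasseDeriv_physHermite, eval_mul, eval_C, Nat.add_sub_cancel,
    Nat.sub_sub_self hk, Nat.choose_symm hk, mul_pow]
  ring

lemma hasDerivAt_eval_mul_exp_neg_sq (p : ℝ[X]) (x : ℝ) :
    HasDerivAt (fun t => p.eval t * exp (-t ^ 2))
      ((derivative p - C 2 * X * p).eval x * exp (-x ^ 2)) x := by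
  have hg : HasDerivAt (fun t : ℝ => exp (-t ^ 2)) (exp (-x ^ 2) * -(2 * x)) x := by
    simpa using ((hasDerivAt_pow 2 x).neg).exp
  refine ((p.hasDerivAt x).mul hg).congr_deriv ?_
  simp only [eval_sub, eval_mul, eval_C, eval_X]
  ring

lemma hasDerivAt_eval_physHermite_mul_exp_neg_sq (n : ℕ) (x : ℝ) :
    HasDerivAt (fun t => (physHermite n).eval t * exp (-t ^ 2))
      (-((physHermite (n + 1)).eval x * exp (-x ^ 2))) x := by
  convert hasDerivAt_eval_mul_exp_neg_sq (physHermite n) x using 1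
  rw [physHermite_succ, eval_sub, eval_sub]
  ring

lemma iteratedDeriv_exp_neg_sq (n : ℕ) (x : ℝ) :
    iteratedDeriv n (fun t => exp (-t ^ 2)) x
      = (-1) ^ n * (physHermite n).eval x * exp (-x ^ 2) := by
  induction n generalizing x with
  | zero => simp
  | succ n ih =>
    rw [iteratedDeriv_succ, funext ih]
    convert ((hasDerivAt_eval_physHermite_mul_exp_neg_sq n x).const_mul ((-1 : ℝ) ^ n)).deriv
      using 1
    · simp only [mul_assoc]
    · ring

lemma hermitePoly_eq_eval_physHermite (n : ℕ) (x : ℝ) :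
    hermitePoly n x = (physHermite n).eval x := by
  rw [hermitePoly, iteratedDeriv_exp_neg_sq]
  have h : exp (x ^ 2) * exp (-x ^ 2) = 1 := by rw [← exp_add, add_neg_cancel, exp_zero]
  have h' : ((-1 : ℝ) ^ n) ^ 2 = 1 := by rw [← pow_mul, mul_comm, pow_mul, neg_one_sq, one_pow]
  linear_combination (physHermite n).eval x * ((-1) ^ n) ^ 2 * h + (physHermite n).eval x * h'

lemma integrable_eval_mul_exp_neg_sq (p : ℝ[X]) :
    Integrable (fun x => p.eval x * exp (-x ^ 2)) := by
  have hpow (i : ℕ) : Integrable (fun x : ℝ => x ^ i * exp (-x ^ 2)) := by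
    simpa using integrable_rpow_mul_exp_neg_mul_sq one_pos (s := i)
      (by linarith [i.cast_nonneg (α := ℝ)])
  simp_rw [eval_eq_sum_range, sum_mul]
  exact integrable_finsetSum _ fun i _ => by simpa [mul_assoc] using (hpow i).const_mul (p.coeff i)

lemma integrable_eval_mul_eval_mul_exp_neg_sq (p q : ℝ[X]) :
    Integrable (fun x => p.eval x * (q.eval x * exp (-x ^ 2))) := by
  simpa [mul_assoc] using integrable_eval_mul_exp_neg_sq (p * q)

lemma integral_eval_mul_physHermite_succ (p : ℝ[X]) (k : ℕ) :
    ∫ x, p.eval x * ((physHermite (k + 1)).eval x * exp (-x ^ 2))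
      = ∫ x, (derivative p).eval x * ((physHermite k).eval x * exp (-x ^ 2)) := by
  have h := integral_mul_deriv_eq_deriv_mul_of_integrable
    (fun x _ => p.hasDerivAt x) (fun x _ => hasDerivAt_eval_physHermite_mul_exp_neg_sq k x)
    (by simpa [Pi.mul_def] using (integrable_eval_mul_eval_mul_exp_neg_sq p _).neg)
    (integrable_eval_mul_eval_mul_exp_neg_sq _ _) (integrable_eval_mul_eval_mul_exp_neg_sq _ _)
  simpa only [mul_neg, integral_neg, neg_inj] using h

lemma integral_physHermite_mul_physHermite (j k : ℕ) :
    ∫ x, (physHermite j).eval x * ((physHermite k).eval x * exp (-x ^ 2))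
      = if j = k then 2 ^ j * j.factorial * √π else 0 := by
  induction k generalizing j with
  | zero =>
    cases j with
    | zero => simpa using integral_gaussian 1
    | succ j =>
      simp_rw [mul_left_comm ((physHermite (j + 1)).eval _), integral_eval_mul_physHermite_succ]
      simp
  | succ k ih =>
    rw [integral_eval_mul_physHermite_succ]
    cases j with
    | zero => simp
    | succ j =>
      simp_rw [derivative_physHermite_succ, eval_mul, eval_C, mul_assoc, integral_const_mul, ih,
        add_left_inj, Nat.factorial_succ]
      split_ifs <;> push_cast <;> ring

lemma integral_physHermite_add_mul_physHermite_add (c m : ℕ) (s t : ℝ) :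
    ∫ u, (physHermite c).eval (u + s) * ((physHermite m).eval (u + t) * exp (-u ^ 2))
      = √π * ∑ k ∈ range (c + 1), (c.choose k * m.choose k : ℝ) * (2 * s) ^ (c - k)
          * (2 * t) ^ (m - k) * (2 ^ k * k.factorial) := by
  have hexpand (u : ℝ) :
      (physHermite c).eval (u + s) * ((physHermite m).eval (u + t) * exp (-u ^ 2))
        = ∑ k ∈ range (c + 1), ∑ i ∈ range (m + 1),
            (c.choose k : ℝ) * (2 * s) ^ (c - k) * ((m.choose i : ℝ) * (2 * t) ^ (m - i))
              * ((physHermite k).eval u * ((physHermite i).eval u * exp (-u ^ 2))) := by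
    simp_rw [physHermite_eval_add, sum_mul, mul_sum]
    exact sum_congr rfl fun k _ => sum_congr rfl fun i _ => by ring
  have hint (k i : ℕ) (a : ℝ) := (integrable_eval_mul_eval_mul_exp_neg_sq
    (physHermite k) (physHermite i)).const_mul a
  simp_rw [hexpand]
  rw [integral_finsetSum _ fun k _ => integrable_finsetSum _ fun i _ => hint k i _]
  simp_rw [integral_finsetSum _ fun i _ => hint _ i _, integral_const_mul,
    integral_physHermite_mul_physHermite, mul_ite, mul_zero, sum_ite_eq, mul_sum]
  refine sum_congr rfl fun k _ => ?_
  split_ifs with hk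
  · ring
  · rw [Nat.choose_eq_zero_of_lt (n := m) (by simpa using hk)]
    simp

noncomputable def hermiteNorm (j : ℕ) : ℝ := √(2 ^ j * j.factorial * √π)

lemma hermiteNorm_pos (j : ℕ) : 0 < hermiteNorm j := by
  unfold hermiteNorm
  positivity

lemma psi_eq (j : ℕ) (x : ℝ) :
    psi j x = (-1) ^ j * (hermiteNorm j)⁻¹ * (physHermite j).eval x * exp (-x ^ 2 / 2) := by
  rw [psi, hermitePoly_eq_eval_physHermite, hermiteNorm]

lemma psiIP_eq_integral (r : ℝ) (c m : ℕ) :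
    psiIP r c m = (-1) ^ (c + m) * (hermiteNorm c * hermiteNorm m)⁻¹ * exp (-r ^ 2 / 4) *
      ∫ u, (physHermite c).eval (u + -(r / 2)) *
        ((physHermite m).eval (u + r / 2) * exp (-u ^ 2)) := by
  rw [psiIP, ← integral_add_right_eq_self _ (r / 2), ← integral_const_mul]
  congr 1 with u
  have hexp : exp (-(u + -(r / 2)) ^ 2 / 2) * exp (-(u + r / 2) ^ 2 / 2)
      = exp (-r ^ 2 / 4) * exp (-u ^ 2) := by
    rw [← exp_add, ← exp_add]
    ring_nf
  rw [show u + r / 2 - r = u + -(r / 2) by ring, psi_eq, psi_eq, pow_add, mul_inv]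
  linear_combination (-1) ^ c * (-1) ^ m * (hermiteNorm c)⁻¹ * (hermiteNorm m)⁻¹
    * (physHermite c).eval (u + -(r / 2)) * (physHermite m).eval (u + r / 2) * hexp

/-- Evaluated at `m`, this is `r^{-m} ∑_k C(c,k) C(m,k) k! 2^k (-r)^{c-k} r^{m-k}`, written with the
falling factorial `m (m-1) ⋯ (m-k+1) = C(m,k) k!` so that it is a polynomial in `m`. -/
noncomputable def overlapPoly (r : ℝ) (c : ℕ) : ℝ[X] :=
  ∑ k ∈ range (c + 1), C (c.choose k * (-r) ^ (c - k) * (2 / r) ^ k) * descPochhammer ℝ k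

lemma natDegree_overlapPoly_le (r : ℝ) (c : ℕ) : (overlapPoly r c).natDegree ≤ c := by
  refine natDegree_sum_le_of_forall_le _ _ fun k hk => (natDegree_C_mul_le _ _).trans ?_
  rw [descPochhammer_natDegree]
  exact Nat.lt_succ_iff.mp (mem_range.mp hk)

lemma coeff_overlapPoly_self (r : ℝ) (c : ℕ) : (overlapPoly r c).coeff c = (2 / r) ^ c := by
  rw [overlapPoly, finsetSum_coeff, sum_eq_single_of_mem c (self_mem_range_succ c)]
  · have hlead : (descPochhammer ℝ c).coeff c = 1 := by
      simpa using (monic_descPochhammer ℝ c).coeff_natDegree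
    rw [coeff_C_mul, hlead]
    simp
  · intro k hk hkc
    refine coeff_eq_zero_of_natDegree_lt ((natDegree_C_mul_le _ _).trans_lt ?_)
    rw [descPochhammer_natDegree]
    exact lt_of_le_of_ne (Nat.lt_succ_iff.mp (mem_range.mp hk)) hkc

lemma psiIP_eq_mul_eval {r : ℝ} (hr : r ≠ 0) (c m : ℕ) :
    psiIP r c m = ((-1) ^ m * (hermiteNorm m)⁻¹ * exp (-r ^ 2 / 4) * r ^ m) *
      (((-1) ^ c * (hermiteNorm c)⁻¹ * √π) * (overlapPoly r c).eval (m : ℝ)) := by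
  rw [psiIP_eq_integral, integral_physHermite_add_mul_physHermite_add, overlapPoly, eval_finsetSum]
  simp only [mul_sum]
  refine sum_congr rfl fun k _ => ?_
  rw [eval_mul, eval_C, descPochhammer_eval_eq_descFactorial, pow_add, mul_inv,
    show 2 * -(r / 2) = -r by ring, show 2 * (r / 2) = r by ring]
  rcases le_or_gt k m with hkm | hmk
  · rw [Nat.descFactorial_eq_factorial_mul_choose, pow_sub₀ r hr hkm]
    push_cast
    rw [div_pow]
    field_simp
  · rw [Nat.choose_eq_zero_of_lt hmk, (Nat.descFactorial_eq_zero_iff_lt).mpr hmk]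
    simp

lemma Matrix.det_eval_matrixOfPolynomials_of_natDegree_le {R : Type*} [CommRing R] {n : ℕ}
    (v : Fin n → R) (p : Fin n → R[X]) (h_deg : ∀ i, (p i).natDegree ≤ i) :
    (Matrix.of fun i j => (p j).eval (v i)).det
      = (∏ i, (p i).coeff i) * (Matrix.vandermonde v).det := by
  rw [Matrix.eval_matrixOfPolynomials_eq_vandermonde_mul_matrixOfPolynomials v p h_deg,
    Matrix.det_mul, mul_comm, Matrix.det_of_isUpperTriangular]
  · rfl
  · exact fun i j hij => coeff_eq_zero_of_natDegree_lt ((h_deg j).trans_lt hij)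

lemma det_vandermonde_eq_CK {ℓ : ℕ} (a : Fin ℓ → ℕ) :
    (Matrix.vandermonde fun b => (a b : ℝ)).det = CK a := by
  rw [Matrix.det_vandermonde, CK]
  exact prod_comm' fun _ _ => by simp

lemma CK_nonneg {ℓ : ℕ} {a : Fin ℓ → ℕ} (ha : Monotone a) : 0 ≤ CK a :=
  prod_nonneg fun _ _ => prod_nonneg fun _ hc => sub_nonneg.mpr (by
    exact_mod_cast ha (mem_filter.mp hc).2.le)

lemma Matrix.det_mul_mul_eval_of_natDegree_le {R : Type*} [CommRing R] {n : ℕ}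
    (u w v : Fin n → R) (p : Fin n → R[X]) (h_deg : ∀ i, (p i).natDegree ≤ i) :
    (Matrix.of fun i j => u i * (w j * (p j).eval (v i))).det
      = (∏ i, u i * w i * (p i).coeff i) * (Matrix.vandermonde v).det := by
  have h_row := Matrix.det_mul_column u (Matrix.of fun i j => w j * (p j).eval (v i))
  have h_col := Matrix.det_mul_row w (Matrix.of fun i j => (p j).eval (v i))
  simp only [Matrix.of_apply] at h_row h_col
  rw [h_row, h_col, Matrix.det_eval_matrixOfPolynomials_of_natDegree_le v p h_deg,
    prod_mul_distrib, prod_mul_distrib]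
  ring

lemma det_psiIP {r : ℝ} (hr : r ≠ 0) {ℓ : ℕ} (a : Fin ℓ → ℕ) :
    (Matrix.of fun b c : Fin ℓ => psiIP r c (a b)).det
      = (∏ c, ((-1) ^ a c * (hermiteNorm (a c))⁻¹ * exp (-r ^ 2 / 4) * r ^ a c) *
          ((-1) ^ (c : ℕ) * (hermiteNorm c)⁻¹ * √π) * (2 / r) ^ (c : ℕ)) * CK a := by
  simp_rw [psiIP_eq_mul_eval hr]
  rw [Matrix.det_mul_mul_eval_of_natDegree_le _ _ (fun b => (a b : ℝ)) (fun c => overlapPoly r c)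
    fun c => natDegree_overlapPoly_le r c, det_vandermonde_eq_CK]
  simp only [coeff_overlapPoly_self]

lemma Fin.val_le_of_strictMono {ℓ : ℕ} {a : Fin ℓ → ℕ} (ha : StrictMono a) (c : Fin ℓ) :
    (c : ℕ) ≤ a c := by
  obtain ⟨c, hc⟩ := c
  induction c with
  | zero => exact Nat.zero_le _
  | succ n ih => exact (ih (by omega)).trans_lt (ha (Fin.mk_lt_mk.mpr n.lt_succ_self))

lemma Fin.sum_univ_val_mul_two (ℓ : ℕ) : (∑ c : Fin ℓ, (c : ℤ)) * 2 = ℓ * (ℓ - 1) := by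
  rw [Fin.sum_univ_eq_sum_range (fun i => (i : ℤ))]
  induction ℓ with
  | zero => simp
  | succ n ih =>
    rw [sum_range_succ, add_mul, ih]
    push_cast
    ring

lemma sum_sub_triangular_eq_sum_sub_val {ℓ : ℕ} {a : Fin ℓ → ℕ}
    (hle : ∀ c : Fin ℓ, (c : ℕ) ≤ a c) :
    (∑ c, (a c : ℤ)) - (ℓ : ℤ) * ((ℓ : ℤ) - 1) / 2 = ((∑ c, (a c - c) : ℕ) : ℤ) := by
  push_cast [Nat.cast_sub (hle _)]
  rw [sum_sub_distrib, ← Fin.sum_univ_val_mul_two, Int.mul_ediv_cancel _ two_ne_zero]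

lemma hermiteNorm_mul_hermiteNorm (n m : ℕ) :
    hermiteNorm n * hermiteNorm m = √2 ^ (n + m) * √π * √(n.factorial * m.factorial) := by
  rw [hermiteNorm, hermiteNorm, ← sqrt_mul (by positivity),
    ← sqrt_sq (by positivity : 0 ≤ √2 ^ (n + m) * √π), ← sqrt_mul (by positivity)]
  congr 1
  rw [mul_pow, ← pow_mul, mul_comm (n + m), pow_mul, sq_sqrt zero_le_two, pow_add]
  ring

lemma abs_psiIP_det_factor {r : ℝ} (hr : 0 < r) {n m : ℕ} (hnm : n ≤ m) :
    |(-1) ^ m * (hermiteNorm m)⁻¹ * exp (-r ^ 2 / 4) * r ^ m *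
        ((-1) ^ n * (hermiteNorm n)⁻¹ * √π) * (2 / r) ^ n|
      = exp (-r ^ 2 / 4) * (√(n.factorial * m.factorial))⁻¹ * (r / √2) ^ (m - n) := by
  obtain ⟨d, rfl⟩ := Nat.exists_eq_add_of_le hnm
  have hnorm := hermiteNorm_mul_hermiteNorm n (n + d)
  have h2 : √2 ^ (n + (n + d)) = 2 ^ n * √2 ^ d := by
    rw [← add_assoc, pow_add, ← two_mul, pow_mul, sq_sqrt zero_le_two]
  rw [h2] at hnorm
  simp only [abs_mul, abs_pow, abs_neg, abs_one, one_pow, one_mul, abs_inv, abs_div,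
    abs_of_pos hr, abs_of_pos (hermiteNorm_pos _), abs_of_pos (exp_pos _),
    abs_of_pos (sqrt_pos.mpr pi_pos), abs_two, Nat.add_sub_cancel_left]
  have hn := hermiteNorm_pos n
  have hm := hermiteNorm_pos (n + d)
  have hsqrt2 := sqrt_pos.mpr (zero_lt_two' ℝ)
  have hr0 := hr.ne'
  simp only [div_pow]
  field_simp
  rw [mul_comm (hermiteNorm (n + d)), hnorm]
  ring

lemma Fl_mul_FK {ℓ : ℕ} (a : Fin ℓ → ℕ) :
    Fl ℓ * FK a = ∏ c : Fin ℓ, ((c : ℕ).factorial * (a c).factorial : ℝ) := by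
  rw [Fl, FK, ← Fin.prod_univ_eq_prod_range (fun c => ((c.factorial : ℕ) : ℝ)), prod_mul_distrib]

theorem stmt13_general (r : ℝ) (hr : 0 < r) (ℓ : ℕ)
    (a : Fin ℓ → ℕ) (ha : StrictMono a) :
    |Matrix.det (Matrix.of fun b c : Fin ℓ => psiIP r (c : ℕ) (a b))|
      = Real.exp (-(ℓ:ℝ) * r^2 / 4) * Real.sqrt (1 / (Fl ℓ * FK a)) *
          (r / Real.sqrt 2) ^ ((∑ c, (a c : ℤ)) - ((ℓ:ℤ) * ((ℓ:ℤ)-1)) / 2) *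
          CK a := by
  have hle := Fin.val_le_of_strictMono ha
  have hexp : exp (-(ℓ : ℝ) * r ^ 2 / 4) = ∏ _c : Fin ℓ, exp (-r ^ 2 / 4) := by
    rw [Fin.prod_const, ← exp_nat_mul]
    ring_nf
  rw [det_psiIP hr.ne', abs_mul, abs_of_nonneg (CK_nonneg ha.monotone), abs_prod,
    sum_sub_triangular_eq_sum_sub_val hle, zpow_natCast, ← prod_pow_eq_pow_sum, hexp, Fl_mul_FK,
    one_div, sqrt_inv, sqrt_prod _ fun _ _ => by positivity, ← prod_inv_distrib,
    ← prod_mul_distrib, ← prod_mul_distrib]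
  exact congrArg (· * CK a) (prod_congr rfl fun c _ => abs_psiIP_det_factor hr (hle c))

theorem stmt13 (r : ℝ) (hr : 0 < r) (ℓ : ℕ) (hℓ : 1 ≤ ℓ)
    (a : Fin ℓ → ℕ) (ha : StrictMono a) :
    |Matrix.det (Matrix.of fun b c : Fin ℓ => psiIP r (c : ℕ) (a b))|
      = Real.exp (-(ℓ:ℝ) * r^2 / 4) * Real.sqrt (1 / (Fl ℓ * FK a)) *
          (r / Real.sqrt 2) ^ ((∑ c, (a c : ℤ)) - ((ℓ:ℤ) * ((ℓ:ℤ)-1)) / 2) *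
          CK a :=
  stmt13_general r hr ℓ a ha
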